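/- arXiv:1508.07515 — 2 statements merged into one kernel-verified Lean document; each statement's English description precedes it below -/
import Mathlib

section
/- The map sending π to E_π = {i ∈ [n] : π(i) > i} (the set of excedances of π among the first n positions) is a bijection from the set of 321-avoiding centrosymmetric involutions in S_{2n} to the power set of [n]. In particular, every 321-avoiding centrosymmetric involution of S_{2n} is uniquely determined by its excedances in positions 1 through n. -/
open Finset Polynomial
open scoped Classical

/-- 1-based value of a permutation of `Fin m`: `pval π i = π(i)` for `1 ≤ i ≤ m`. -/
def pval {m : ℕ} (π : Equiv.Perm (Fin m)) (i : ℕ) : ℕ :=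
  if h : i - 1 < m then (π ⟨i - 1, h⟩ : ℕ) + 1 else 0

/-- `π` is centrosymmetric: `π(i) + π(m+1-i) = m+1` for all `1 ≤ i ≤ m`. -/
def Centro {m : ℕ} (π : Equiv.Perm (Fin m)) : Prop :=
  ∀ i ∈ Finset.Icc 1 m, pval π i + pval π (m + 1 - i) = m + 1

/-- `π` avoids the pattern 321: no decreasing subsequence of length 3. -/
def Avoids321 {m : ℕ} (π : Equiv.Perm (Fin m)) : Prop :=
  ¬ ∃ i j k : Fin m, i < j ∧ j < k ∧ π k < π j ∧ π j < π i

/-- The descent set of `π`: positions `1 ≤ i < m` with `π(i) > π(i+1)`. -/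
def DesSet {m : ℕ} (π : Equiv.Perm (Fin m)) : Finset ℕ :=
  (Finset.Ico 1 m).filter (fun i => pval π (i + 1) < pval π i)

/-- The number of descents of `π`. -/
def desNum {m : ℕ} (π : Equiv.Perm (Fin m)) : ℕ := (DesSet π).card

/-- The major index of `π`: the sum of the descent positions. -/
def majStat {m : ℕ} (π : Equiv.Perm (Fin m)) : ℕ := ∑ i ∈ DesSet π, i

/-- The excedances of `π ∈ S_{2n}` among positions `1,…,n`. -/
def Epi {n : ℕ} (π : Equiv.Perm (Fin (2 * n))) : Finset ℕ :=
  (Finset.Icc 1 n).filter (fun i => i < pval π i)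

/-- The set `I^C_{2n}(321)` of 321-avoiding centrosymmetric involutions of `S_{2n}`. -/
noncomputable def ICset (n : ℕ) : Finset (Equiv.Perm (Fin (2 * n))) :=
  Finset.univ.filter (fun π => Function.Involutive π ∧ Centro π ∧ Avoids321 π)

/-!
A `321`-avoiding involution is a set of arcs `i < π i` whose right ends increase with the left
ends and under which no fixed point lies.

Injectivity: if `π ≠ σ` have the same excedances in `[1, n]`, then by centrosymmetry they differ
in `[1, n]`; at the first such position `i` both have an excedance, say `π i < σ i`, and the value
of `σ` at `π i` either completes a `321` pattern of `σ` or, reflected through the centre, gives a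
position of `[1, n]` that is an excedance of exactly one of `π`, `σ`.

Surjectivity: read `[1, n]` from left to right, letting each element of `E` open an arc and every
other position close the oldest open arc, if any. Reflecting this through the centre, with
openers and closers exchanged, gives openers and closers in `[1, 2n]` in which every prefix has at
least as many openers as closers, with equality at the remaining positions; joining the `k`-th
opener to the `k`-th closer then gives the required involution.
-/

lemma avoids321_of_strictMonoOn {m : ℕ} (π : Equiv.Perm (Fin m))
    (hexc : StrictMonoOn π {x | x < π x}) (hnexc : StrictMonoOn π {x | π x ≤ x}) :
    Avoids321 π := by
  have split : ∀ a b, a < b → π b < π a → (a < π a ↔ ¬ b < π b) := by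
    intro a b hab hba
    refine ⟨fun ha hb => lt_asymm hba (hexc ha hb hab), fun hb => ?_⟩
    by_contra ha
    exact lt_asymm hba (hnexc (not_lt.mp ha) (not_lt.mp hb) hab)
  rintro ⟨i, j, k, hij, hjk, hkj, hji⟩
  have := split i j hij hji
  have := split j k hjk hkj
  have := split i k (hij.trans hjk) (hkj.trans hji)
  tauto

lemma card_filter_lt_orderEmbOfFin {α : Type*} [LinearOrder α] (s : Finset α) {k : ℕ}
    (h : #s = k) (j : Fin k) : #{x ∈ s | x < s.orderEmbOfFin h j} = j := by
  have : {x ∈ s | x < s.orderEmbOfFin h j} = (Iio j).map (s.orderEmbOfFin h).toEmbedding := by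
    ext x
    simp only [mem_filter, mem_map, mem_Iio, RelEmbedding.coe_toEmbedding]
    constructor
    · rintro ⟨hx, hlt⟩
      obtain ⟨i, rfl⟩ : x ∈ Set.range (s.orderEmbOfFin h) := by rwa [range_orderEmbOfFin]
      exact ⟨i, (s.orderEmbOfFin h).lt_iff_lt.mp hlt, rfl⟩
    · rintro ⟨i, hi, rfl⟩
      exact ⟨s.orderEmbOfFin_mem h i, (s.orderEmbOfFin h).lt_iff_lt.mpr hi⟩
  rw [this, card_map, Fin.card_Iio]

lemma orderEmbOfFin_le_iff {α : Type*} [LinearOrder α] (s : Finset α) {k : ℕ} (h : #s = k)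
    (j : Fin k) (p : α) : s.orderEmbOfFin h j ≤ p ↔ (j : ℕ) < #{x ∈ s | x ≤ p} := by
  rw [← card_filter_lt_orderEmbOfFin s h j]
  constructor
  · intro hj
    refine card_lt_card ⟨monotone_filter_right _ fun x _ hx => hx.le.trans hj, fun hsub => ?_⟩
    have := hsub (mem_filter.mpr ⟨s.orderEmbOfFin_mem h j, hj⟩)
    exact lt_irrefl _ (mem_filter.mp this).2
  · intro hj
    by_contra hlt
    refine not_le.mpr hj (card_le_card (monotone_filter_right _ fun x _ hx => ?_))
    exact lt_of_le_of_lt hx (not_le.mp hlt)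

lemma pval_succ {m : ℕ} (π : Equiv.Perm (Fin m)) (x : Fin m) : pval π (x + 1) = π x + 1 := by
  simp [pval]

lemma centro_iff {m : ℕ} (π : Equiv.Perm (Fin m)) :
    Centro π ↔ ∀ x, π x.rev = (π x).rev := by
  constructor
  · intro h x
    have := h (x + 1) (by simp only [mem_Icc]; omega)
    have hx : m + 1 - (x + 1) = (x.rev : ℕ) + 1 := by simp [Fin.val_rev]; omega
    rw [hx, pval_succ, pval_succ] at this
    ext; simp only [Fin.val_rev]; omega
  · intro h i hi
    obtain ⟨hi1, him⟩ := mem_Icc.mp hi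
    obtain ⟨x, rfl⟩ : ∃ x : Fin m, (x : ℕ) + 1 = i :=
      ⟨⟨i - 1, by omega⟩, by simp only; omega⟩
    have hx : m + 1 - (x + 1) = (x.rev : ℕ) + 1 := by simp [Fin.val_rev]; omega
    rw [hx, pval_succ, pval_succ, h x, Fin.val_rev]
    omega

lemma succ_mem_Epi_iff {n : ℕ} (π : Equiv.Perm (Fin (2 * n))) (x : Fin (2 * n)) :
    (x : ℕ) + 1 ∈ Epi π ↔ (x : ℕ) < n ∧ x < π x := by
  simp only [Epi, mem_filter, mem_Icc, pval_succ, Fin.lt_def]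
  omega

lemma mem_ICset {n : ℕ} {π : Equiv.Perm (Fin (2 * n))} :
    π ∈ ICset n ↔ Function.Involutive π ∧ Centro π ∧ Avoids321 π := by
  simp [ICset]

lemma Epi_subset {n : ℕ} (π : Equiv.Perm (Fin (2 * n))) : Epi π ⊆ Icc 1 n := filter_subset _ _

section Injectivity

variable {n : ℕ} {π σ : Equiv.Perm (Fin (2 * n))}
  (hπ : Function.Involutive π) (hσ : Function.Involutive σ)
  (hπc : ∀ x, π x.rev = (π x).rev) (hσc : ∀ x, σ x.rev = (σ x).rev)
  (hexc : ∀ x : Fin (2 * n), (x : ℕ) < n → (x < π x ↔ x < σ x))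

include hπ hσ hπc hσc hexc in
lemma not_lt_of_eqOn_Iio (hσa : Avoids321 σ) {i : Fin (2 * n)}
    (hagree : Set.EqOn π σ (Set.Iio i)) (hi : i < π i) : ¬ π i < σ i := by
  intro hlt
  set j := π i with hj
  rcases lt_trichotomy (σ j) i with hji | hji | hji
  · have : π (σ j) = π i := by rw [hagree hji, hσ]
    exact hji.ne (π.injective this)
  · have : σ i = j := by rw [← hji, hσ]
    exact hlt.ne' this
  rcases lt_trichotomy (σ j) j with hjj | hjj | hjj
  · exact hσa ⟨i, σ j, j, hji, hjj, by rwa [hσ], by rwa [hσ]⟩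
  · exact hσa ⟨i, j, σ i, hi, hlt, by rwa [hσ, hjj], by rwa [hjj]⟩
  by_cases hjn : (j : ℕ) < n
  · have := (hexc j hjn).mpr hjj
    rw [hj, hπ] at this
    exact lt_asymm hi this
  · have hrev : (j.rev : ℕ) < n := by simp only [Fin.val_rev]; omega
    have hπr : j.rev < π j.rev := by
      rw [hπc, hj, hπ, Fin.rev_lt_rev]; exact hi
    have := (hexc _ hrev).mp hπr
    rw [hσc, Fin.rev_lt_rev] at this
    exact lt_asymm hjj this

include hπ hσ hπc hσc hexc in
lemma eq_of_eqOn_Iio (hπa : Avoids321 π) (hσa : Avoids321 σ) {i : Fin (2 * n)}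
    (hin : (i : ℕ) < n) (hagree : Set.EqOn π σ (Set.Iio i)) : π i = σ i := by
  by_cases hi : i < π i
  · have hi' : i < σ i := (hexc i hin).mp hi
    have hexc' : ∀ x : Fin (2 * n), (x : ℕ) < n → (x < σ x ↔ x < π x) :=
      fun x hx => (hexc x hx).symm
    refine le_antisymm (not_lt.mp ?_) (not_lt.mp ?_)
    · exact not_lt_of_eqOn_Iio hσ hπ hσc hπc hexc' hπa hagree.symm hi'
    · exact not_lt_of_eqOn_Iio hπ hσ hπc hσc hexc hσa hagree hi
  · have hi' : ¬ i < σ i := fun h => hi ((hexc i hin).mpr h)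
    rcases (not_lt.mp hi).lt_or_eq with hπi | hπi
    · have : σ (π i) = i := by rw [← hagree hπi, hπ]
      rw [← hσ (π i), this]
    rcases (not_lt.mp hi').lt_or_eq with hσi | hσi
    · have : π (σ i) = i := by rw [hagree hσi, hσ]
      rw [← hπ (σ i), this]
    rw [hπi, hσi]

end Injectivity

theorem eq_of_Epi_eq {n : ℕ} {π σ : Equiv.Perm (Fin (2 * n))} (hπ : π ∈ ICset n)
    (hσ : σ ∈ ICset n) (hE : Epi π = Epi σ) : π = σ := by
  rw [mem_ICset, centro_iff] at hπ hσ
  obtain ⟨hπi, hπc, hπa⟩ := hπ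
  obtain ⟨hσi, hσc, hσa⟩ := hσ
  have hexc : ∀ x : Fin (2 * n), (x : ℕ) < n → (x < π x ↔ x < σ x) := fun x hx => by
    have hπx := succ_mem_Epi_iff π x
    have hσx := succ_mem_Epi_iff σ x
    rw [hE] at hπx
    simp only [hx, true_and] at hπx hσx
    exact hπx.symm.trans hσx
  have hlow : ∀ i : Fin (2 * n), (i : ℕ) < n → π i = σ i := by
    intro i
    induction i using WellFoundedLT.induction with
    | ind i ih =>
      intro hin
      refine eq_of_eqOn_Iio hπi hσi hπc hσc hexc hπa hσa hin fun y hy => ih y hy ?_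
      exact lt_of_lt_of_le (Fin.lt_def.mp hy) hin.le
  ext x
  by_cases hx : (x : ℕ) < n
  · rw [hlow x hx]
  · have hrev : (x.rev : ℕ) < n := by simp only [Fin.val_rev]; omega
    rw [← Fin.rev_rev x, hπc, hσc, hlow _ hrev]

section Scan

variable {n : ℕ} {E : Finset ℕ}

def mirrorPos (n i : ℕ) : ℕ := 2 * n + 1 - i

lemma mirrorPos_mirrorPos {i : ℕ} (h : i ≤ 2 * n + 1) : mirrorPos n (mirrorPos n i) = i := by
  unfold mirrorPos; omega

lemma mirrorPos_injOn : Set.InjOn (mirrorPos n) (Icc 1 (2 * n) : Set ℕ) := by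
  intro i hi j hj h
  simp only [coe_Icc, Set.mem_Icc, mirrorPos] at hi hj h
  omega

/-- Reading positions `1, 2, …` from left to right, each position of `E` opens an arc and any
other position closes the oldest open arc if there is one; `openCount E i` is the number of arcs
still open after position `i`. The truncated subtraction makes a position outside `E` read at
count `0` a fixed point. -/
def openCount (E : Finset ℕ) : ℕ → ℕ
  | 0 => 0
  | i + 1 => if i + 1 ∈ E then openCount E i + 1 else openCount E i - 1

def lowerClosers (n : ℕ) (E : Finset ℕ) : Finset ℕ :=
  {i ∈ Icc 1 n | i ∉ E ∧ 0 < openCount E (i - 1)}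

/-- The upper half of `[1, 2n]` is the centrosymmetric image of the lower half, with openers and
closers exchanged. -/
def openers (n : ℕ) (E : Finset ℕ) : Finset ℕ := E ∪ (lowerClosers n E).image (mirrorPos n)

def closers (n : ℕ) (E : Finset ℕ) : Finset ℕ := (openers n E).image (mirrorPos n)

def prefixCount (X : Finset ℕ) (p : ℕ) : ℕ := #{x ∈ X | x ≤ p}

lemma lowerClosers_subset : lowerClosers n E ⊆ Icc 1 n := filter_subset _ _

lemma notMem_of_mem_lowerClosers {i : ℕ} (h : i ∈ lowerClosers n E) : i ∉ E :=
  (mem_filter.mp h).2.1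

lemma mem_lowerClosers_iff {i : ℕ} (h1 : 1 ≤ i) (h2 : i ≤ n) :
    i ∈ lowerClosers n E ↔ i ∉ E ∧ 0 < openCount E (i - 1) := by
  simp [lowerClosers, h1, h2]

lemma openers_subset (hE : E ⊆ Icc 1 n) : openers n E ⊆ Icc 1 (2 * n) := by
  refine union_subset (hE.trans (Icc_subset_Icc le_rfl (by omega))) ?_
  intro x hx
  obtain ⟨d, hd, rfl⟩ := mem_image.mp hx
  have := mem_Icc.mp (lowerClosers_subset hd)
  simp only [mem_Icc, mirrorPos]; omega

lemma mem_closers_iff (hE : E ⊆ Icc 1 n) {i : ℕ} (h : i ≤ 2 * n) :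
    i ∈ closers n E ↔ mirrorPos n i ∈ openers n E := by
  constructor
  · intro hi
    obtain ⟨a, ha, rfl⟩ := mem_image.mp hi
    have := mem_Icc.mp (openers_subset hE ha)
    rwa [mirrorPos_mirrorPos (by omega)]
  · intro hi
    exact mem_image.mpr ⟨mirrorPos n i, hi, mirrorPos_mirrorPos (by omega)⟩

lemma closers_subset (hE : E ⊆ Icc 1 n) : closers n E ⊆ Icc 1 (2 * n) := by
  intro x hx
  obtain ⟨a, ha, rfl⟩ := mem_image.mp hx
  have := mem_Icc.mp (openers_subset hE ha)
  simp only [mem_Icc, mirrorPos]; omega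

lemma mem_openers_iff_of_le {i : ℕ} (h : i ≤ n) :
    i ∈ openers n E ↔ i ∈ E := by
  refine ⟨fun hi => ?_, fun hi => mem_union_left _ hi⟩
  rcases mem_union.mp hi with hi | hi
  · exact hi
  · obtain ⟨d, hd, rfl⟩ := mem_image.mp hi
    have := mem_Icc.mp (lowerClosers_subset hd)
    simp only [mirrorPos] at h; omega

lemma mem_openers_iff_of_lt (hE : E ⊆ Icc 1 n) {i : ℕ} (h : n < i) :
    i ∈ openers n E ↔ mirrorPos n i ∈ lowerClosers n E := by
  constructor
  · intro hi
    rcases mem_union.mp hi with hi | hi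
    · have := mem_Icc.mp (hE hi); omega
    · obtain ⟨d, hd, rfl⟩ := mem_image.mp hi
      have := mem_Icc.mp (lowerClosers_subset hd)
      rwa [mirrorPos_mirrorPos (by omega)]
  · intro hi
    have := mem_Icc.mp (lowerClosers_subset hi)
    have hi2 : i ≤ 2 * n := by simp only [mirrorPos] at this; omega
    exact mem_union_right _ (mem_image.mpr ⟨_, hi, mirrorPos_mirrorPos (by omega)⟩)

lemma mem_closers_iff_of_le (hE : E ⊆ Icc 1 n) {i : ℕ} (h : i ≤ n) :
    i ∈ closers n E ↔ i ∈ lowerClosers n E := by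
  by_cases h1 : 1 ≤ i
  · rw [mem_closers_iff hE (by omega), mem_openers_iff_of_lt hE (by simp only [mirrorPos]; omega),
      mirrorPos_mirrorPos (by omega)]
  · constructor <;> intro hi
    · have := mem_Icc.mp (closers_subset hE hi); omega
    · have := mem_Icc.mp (lowerClosers_subset hi); omega

lemma disjoint_openers_closers (hE : E ⊆ Icc 1 n) : Disjoint (openers n E) (closers n E) := by
  rw [disjoint_left]
  intro x hxA hxB
  have hx := mem_Icc.mp (openers_subset hE hxA)
  by_cases h : x ≤ n
  · exact notMem_of_mem_lowerClosers ((mem_closers_iff_of_le hE h).mp hxB)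
      ((mem_openers_iff_of_le h).mp hxA)
  · have hxB' := (mem_closers_iff hE hx.2).mp hxB
    rw [mem_openers_iff_of_le (by simp only [mirrorPos]; omega)] at hxB'
    exact notMem_of_mem_lowerClosers ((mem_openers_iff_of_lt hE (by omega)).mp hxA) hxB'

lemma card_closers (hE : E ⊆ Icc 1 n) : #(closers n E) = #(openers n E) :=
  card_image_of_injOn (mirrorPos_injOn.mono (by exact_mod_cast openers_subset hE))

lemma closers_image_mirrorPos (hE : E ⊆ Icc 1 n) :
    (closers n E).image (mirrorPos n) = openers n E := by
  rw [closers, image_image]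
  refine (image_congr fun x hx => ?_).trans image_id
  have := mem_Icc.mp (openers_subset hE hx)
  exact mirrorPos_mirrorPos (by omega)

end Scan

section PrefixCount

variable {n : ℕ} {E : Finset ℕ}

lemma prefixCount_succ (X : Finset ℕ) (i : ℕ) :
    prefixCount X (i + 1) = prefixCount X i + if i + 1 ∈ X then 1 else 0 := by
  have h : {x ∈ X | x ≤ i + 1} = {x ∈ X | x ≤ i} ∪ {x ∈ X | x = i + 1} := by
    ext x; simp only [mem_union, mem_filter, ← and_or_left, Nat.le_add_one_iff]
  rw [prefixCount, prefixCount, h,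
    card_union_of_disjoint (disjoint_filter.mpr fun _ _ h1 h2 => by omega), filter_eq']
  split_ifs <;> rfl

lemma prefixCount_zero_of_subset {X : Finset ℕ} {m : ℕ} (h : X ⊆ Icc 1 m) :
    prefixCount X 0 = 0 := by
  refine card_eq_zero.mpr (filter_eq_empty_iff.mpr fun x hx => ?_)
  have := mem_Icc.mp (h hx); omega

lemma prefixCount_eq_card {X : Finset ℕ} {p : ℕ} (h : ∀ x ∈ X, x ≤ p) :
    prefixCount X p = #X :=
  congrArg card (filter_true_of_mem h)

lemma prefixCount_congr {X Y : Finset ℕ} {p : ℕ} (h : ∀ i ≤ p, i ∈ X ↔ i ∈ Y) :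
    prefixCount X p = prefixCount Y p := by
  unfold prefixCount
  congr 1
  ext x
  simp only [mem_filter]
  exact ⟨fun hx => ⟨(h x hx.2).mp hx.1, hx.2⟩, fun hx => ⟨(h x hx.2).mpr hx.1, hx.2⟩⟩

lemma prefixCount_add_prefixCount_image_mirrorPos {S : Finset ℕ} (hS : S ⊆ Icc 1 (2 * n))
    {p : ℕ} (hp : p ≤ 2 * n) :
    prefixCount S p + prefixCount (S.image (mirrorPos n)) (2 * n - p) = #S := by
  have himage : {y ∈ S.image (mirrorPos n) | y ≤ 2 * n - p} =
      {x ∈ S | ¬ x ≤ p}.image (mirrorPos n) := by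
    rw [filter_image]
    congr 1
    refine filter_congr fun x hx => ?_
    have := mem_Icc.mp (hS hx)
    simp only [mirrorPos]; omega
  rw [prefixCount, prefixCount, himage, card_image_of_injOn
    (mirrorPos_injOn.mono (by exact_mod_cast (filter_subset _ _).trans hS))]
  exact card_filter_add_card_filter_not _

lemma openCount_add_prefixCount_lowerClosers (hE : E ⊆ Icc 1 n) {i : ℕ} (hi : i ≤ n) :
    openCount E i + prefixCount (lowerClosers n E) i = prefixCount E i := by
  induction i with
  | zero =>
    rw [prefixCount_zero_of_subset lowerClosers_subset, prefixCount_zero_of_subset hE]; rfl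
  | succ i ih =>
    have ih := ih (by omega)
    have hmem := mem_lowerClosers_iff (E := E) (show 1 ≤ i + 1 by omega) hi
    by_cases hm : i + 1 ∈ E <;> by_cases hc : 0 < openCount E i <;>
      simp [prefixCount_succ, hmem, openCount, hm, hc] <;> omega

lemma prefixCount_openers_of_le {p : ℕ} (hp : p ≤ n) :
    prefixCount (openers n E) p = prefixCount E p :=
  prefixCount_congr fun _ hi => mem_openers_iff_of_le (hi.trans hp)

lemma prefixCount_closers_of_le (hE : E ⊆ Icc 1 n) {p : ℕ} (hp : p ≤ n) :
    prefixCount (closers n E) p = prefixCount (lowerClosers n E) p :=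
  prefixCount_congr fun _ hi => mem_closers_iff_of_le hE (hi.trans hp)

lemma prefixCount_openers_add_prefixCount_closers (hE : E ⊆ Icc 1 n) {p : ℕ}
    (hp : p ≤ 2 * n) :
    prefixCount (openers n E) p + prefixCount (closers n E) (2 * n - p) = #(openers n E) :=
  prefixCount_add_prefixCount_image_mirrorPos (openers_subset hE) hp

lemma prefixCount_closers_add_prefixCount_openers (hE : E ⊆ Icc 1 n) {p : ℕ}
    (hp : p ≤ 2 * n) :
    prefixCount (closers n E) p + prefixCount (openers n E) (2 * n - p) = #(openers n E) := by
  have := prefixCount_add_prefixCount_image_mirrorPos (closers_subset hE) hp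
  rwa [closers_image_mirrorPos hE, card_closers hE] at this

lemma prefixCount_closers_le_openers (hE : E ⊆ Icc 1 n) (p : ℕ) :
    prefixCount (closers n E) p ≤ prefixCount (openers n E) p := by
  have low : ∀ q ≤ n, prefixCount (closers n E) q ≤ prefixCount (openers n E) q := by
    intro q hq
    have := openCount_add_prefixCount_lowerClosers hE hq
    rw [prefixCount_openers_of_le hq, prefixCount_closers_of_le hE hq]
    omega
  by_cases hp : p ≤ n
  · exact low p hp
  by_cases hp2 : p ≤ 2 * n
  · have h1 := prefixCount_openers_add_prefixCount_closers hE hp2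
    have h2 := prefixCount_closers_add_prefixCount_openers hE hp2
    have h3 := low (2 * n - p) (by omega)
    omega
  · have hA := prefixCount_eq_card (X := openers n E) (p := p) fun x hx => by
      have := mem_Icc.mp (openers_subset hE hx); omega
    have hB := prefixCount_eq_card (X := closers n E) (p := p) fun x hx => by
      have := mem_Icc.mp (closers_subset hE hx); omega
    rw [hA, hB, card_closers hE]

lemma prefixCount_openers_eq_closers_of_openCount_eq_zero (hE : E ⊆ Icc 1 n) {q : ℕ}
    (hq : q ≤ n) (hc : openCount E q = 0) :
    prefixCount (openers n E) q = prefixCount (closers n E) q := by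
  have := openCount_add_prefixCount_lowerClosers hE hq
  rw [prefixCount_openers_of_le hq, prefixCount_closers_of_le hE hq]
  omega

lemma openCount_pred_eq_zero (hE : E ⊆ Icc 1 n) {x : ℕ} (h1 : 1 ≤ x) (hx : x ≤ n)
    (hA : x ∉ openers n E) (hB : x ∉ closers n E) : openCount E (x - 1) = 0 := by
  rw [mem_openers_iff_of_le hx] at hA
  rw [mem_closers_iff_of_le hE hx, mem_lowerClosers_iff h1 hx] at hB
  exact Nat.eq_zero_of_not_pos fun h => hB ⟨hA, h⟩

/-- A position outside `openers n E ∪ closers n E` is not covered by any arc. -/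
lemma prefixCount_openers_eq_closers_of_notMem (hE : E ⊆ Icc 1 n) {x : ℕ} (h1 : 1 ≤ x)
    (h2 : x ≤ 2 * n) (hA : x ∉ openers n E) (hB : x ∉ closers n E) :
    prefixCount (openers n E) x = prefixCount (closers n E) x := by
  by_cases hx : x ≤ n
  · refine prefixCount_openers_eq_closers_of_openCount_eq_zero hE hx ?_
    obtain ⟨y, rfl⟩ : ∃ y, x = y + 1 := ⟨x - 1, by omega⟩
    have hy := openCount_pred_eq_zero hE h1 hx hA hB
    rw [mem_openers_iff_of_le hx] at hA
    simp only [openCount, if_neg hA, Nat.add_sub_cancel] at hy ⊢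
    omega
  set f := mirrorPos n x with hf
  have hfn : 1 ≤ f ∧ f ≤ n := by simp only [hf, mirrorPos]; omega
  have hfA : f ∉ openers n E := fun h => hB ((mem_closers_iff hE h2).mpr h)
  have hfB : f ∉ closers n E := by
    rwa [mem_closers_iff hE (by omega), hf, mirrorPos_mirrorPos (by omega)]
  have hc := openCount_pred_eq_zero hE hfn.1 hfn.2 hfA hfB
  have hq : f - 1 = 2 * n - x := by simp only [hf, mirrorPos]; omega
  rw [hq] at hc
  have h3 := prefixCount_openers_eq_closers_of_openCount_eq_zero hE (by omega) hc
  have h4 := prefixCount_openers_add_prefixCount_closers hE h2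
  have h5 := prefixCount_closers_add_prefixCount_openers hE h2
  omega

end PrefixCount

section Matching

variable (n : ℕ) (E : Finset ℕ)

noncomputable def openerAt : Fin #(openers n E) ↪o ℕ := (openers n E).orderEmbOfFin rfl

/-- The `j`-th closer; since the closers are the mirror images of the openers, it is the mirror
image of the `j`-th opener from the right. -/
noncomputable def closerAt (j : Fin #(openers n E)) : ℕ := mirrorPos n (openerAt n E j.rev)

noncomputable def openerRank {x : ℕ} (hx : x ∈ openers n E) : Fin #(openers n E) :=
  ((openers n E).orderIsoOfFin rfl).symm ⟨x, hx⟩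

/-- The arcs join the `j`-th opener to the `j`-th closer; all other positions are fixed. -/
noncomputable def matchFun (x : ℕ) : ℕ :=
  if hx : x ∈ openers n E then closerAt n E (openerRank n E hx)
  else if hx : mirrorPos n x ∈ openers n E then openerAt n E (openerRank n E hx).rev
  else x

variable {n E}

lemma openerAt_mem (j : Fin #(openers n E)) : openerAt n E j ∈ openers n E :=
  orderEmbOfFin_mem _ _ j

lemma exists_openerAt_eq {x : ℕ} (hx : x ∈ openers n E) : ∃ j, openerAt n E j = x := by
  rwa [← Set.mem_range, openerAt, range_orderEmbOfFin]

lemma openerRank_openerAt (j : Fin #(openers n E)) : openerRank n E (openerAt_mem j) = j := by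
  rw [openerRank, OrderIso.symm_apply_eq]
  exact Subtype.ext (coe_orderIsoOfFin_apply _ _ j).symm

lemma closerAt_mem (j : Fin #(openers n E)) : closerAt n E j ∈ closers n E :=
  mem_image_of_mem _ (openerAt_mem _)

lemma mirrorPos_closerAt (hE : E ⊆ Icc 1 n) (j : Fin #(openers n E)) :
    mirrorPos n (closerAt n E j) = openerAt n E j.rev := by
  have := mem_Icc.mp (openers_subset hE (openerAt_mem j.rev))
  exact mirrorPos_mirrorPos (by omega)

lemma closerAt_eq_orderEmbOfFin (hE : E ⊆ Icc 1 n) (j : Fin #(openers n E)) :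
    closerAt n E j = (closers n E).orderEmbOfFin (card_closers hE) j := by
  refine congrFun (orderEmbOfFin_unique (card_closers hE) closerAt_mem fun a b hab => ?_) j
  have hlt := (openerAt n E).strictMono (Fin.rev_lt_rev.mpr hab)
  have ha := mem_Icc.mp (openers_subset hE (openerAt_mem a.rev))
  simp only [closerAt, mirrorPos]
  omega

lemma exists_closerAt_eq (hE : E ⊆ Icc 1 n) {x : ℕ} (hx : x ∈ closers n E) :
    ∃ j, closerAt n E j = x := by
  obtain ⟨j, hj⟩ : x ∈ Set.range ((closers n E).orderEmbOfFin (card_closers hE)) := by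
    rwa [range_orderEmbOfFin]
  exact ⟨j, (closerAt_eq_orderEmbOfFin hE j).trans hj⟩

lemma openerAt_lt_closerAt (hE : E ⊆ Icc 1 n) (j : Fin #(openers n E)) :
    openerAt n E j < closerAt n E j := by
  have hB : (j : ℕ) < prefixCount (closers n E) (closerAt n E j) := by
    rw [prefixCount, ← orderEmbOfFin_le_iff _ (card_closers hE), ← closerAt_eq_orderEmbOfFin hE]
  have hA : openerAt n E j ≤ closerAt n E j :=
    (orderEmbOfFin_le_iff _ _ j _).mpr (hB.trans_le (prefixCount_closers_le_openers hE _))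
  refine hA.lt_of_ne fun h => ?_
  exact disjoint_left.mp (disjoint_openers_closers hE) (openerAt_mem j) (h ▸ closerAt_mem j)

lemma openerRank_eq {x : ℕ} (hx : x ∈ openers n E) {j : Fin #(openers n E)}
    (h : openerAt n E j = x) : openerRank n E hx = j := by
  subst h; exact openerRank_openerAt j

lemma matchFun_openerAt (j : Fin #(openers n E)) :
    matchFun n E (openerAt n E j) = closerAt n E j := by
  rw [matchFun, dif_pos (openerAt_mem j), openerRank_openerAt]

lemma matchFun_closerAt (hE : E ⊆ Icc 1 n) (j : Fin #(openers n E)) :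
    matchFun n E (closerAt n E j) = openerAt n E j := by
  have hA : closerAt n E j ∉ openers n E :=
    disjoint_right.mp (disjoint_openers_closers hE) (closerAt_mem j)
  have hmA : mirrorPos n (closerAt n E j) ∈ openers n E := by
    rw [mirrorPos_closerAt hE]; exact openerAt_mem _
  rw [matchFun, dif_neg hA, dif_pos hmA, openerRank_eq hmA (mirrorPos_closerAt hE j).symm,
    Fin.rev_rev]

lemma matchFun_of_notMem (hE : E ⊆ Icc 1 n) {x : ℕ} (hA : x ∉ openers n E)
    (hB : x ∉ closers n E) : matchFun n E x = x := by
  rw [matchFun, dif_neg hA, dif_neg fun h => ?_]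
  by_cases hx : x ≤ 2 * n
  · exact hB ((mem_closers_iff hE hx).mpr h)
  · have := mem_Icc.mp (openers_subset hE h)
    simp only [mirrorPos] at this; omega

lemma closerAt_rev (j : Fin #(openers n E)) :
    closerAt n E j.rev = mirrorPos n (openerAt n E j) := by
  rw [closerAt, Fin.rev_rev]

lemma matchFun_matchFun (hE : E ⊆ Icc 1 n) (x : ℕ) : matchFun n E (matchFun n E x) = x := by
  by_cases hA : x ∈ openers n E
  · obtain ⟨j, rfl⟩ := exists_openerAt_eq hA
    rw [matchFun_openerAt, matchFun_closerAt hE]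
  by_cases hB : x ∈ closers n E
  · obtain ⟨j, rfl⟩ := exists_closerAt_eq hE hB
    rw [matchFun_closerAt hE, matchFun_openerAt]
  rw [matchFun_of_notMem hE hA hB, matchFun_of_notMem hE hA hB]

lemma matchFun_mem_Icc (hE : E ⊆ Icc 1 n) {x : ℕ} (hx : x ∈ Icc 1 (2 * n)) :
    matchFun n E x ∈ Icc 1 (2 * n) := by
  by_cases hA : x ∈ openers n E
  · obtain ⟨j, rfl⟩ := exists_openerAt_eq hA
    rw [matchFun_openerAt]
    exact closers_subset hE (closerAt_mem j)
  by_cases hB : x ∈ closers n E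
  · obtain ⟨j, rfl⟩ := exists_closerAt_eq hE hB
    rw [matchFun_closerAt hE]
    exact openers_subset hE (openerAt_mem j)
  rwa [matchFun_of_notMem hE hA hB]

lemma matchFun_mirrorPos (hE : E ⊆ Icc 1 n) {x : ℕ} (hx : x ∈ Icc 1 (2 * n)) :
    matchFun n E (mirrorPos n x) = mirrorPos n (matchFun n E x) := by
  replace hx := mem_Icc.mp hx
  by_cases hA : x ∈ openers n E
  · obtain ⟨j, rfl⟩ := exists_openerAt_eq hA
    rw [← closerAt_rev, matchFun_closerAt hE, matchFun_openerAt, mirrorPos_closerAt hE]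
  by_cases hB : x ∈ closers n E
  · obtain ⟨j, rfl⟩ := exists_closerAt_eq hE hB
    rw [mirrorPos_closerAt hE, matchFun_openerAt, matchFun_closerAt hE, closerAt_rev]
  have hmA : mirrorPos n x ∉ openers n E := fun h => hB ((mem_closers_iff hE hx.2).mpr h)
  have hmB : mirrorPos n x ∉ closers n E := by
    rwa [mem_closers_iff hE (show mirrorPos n x ≤ 2 * n by simp only [mirrorPos]; omega),
      mirrorPos_mirrorPos (show x ≤ 2 * n + 1 by omega)]
  rw [matchFun_of_notMem hE hmA hmB, matchFun_of_notMem hE hA hB]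

lemma matchFun_lt_of_mem_closers (hE : E ⊆ Icc 1 n) {x : ℕ} (hx : x ∈ closers n E) :
    matchFun n E x < x := by
  obtain ⟨j, rfl⟩ := exists_closerAt_eq hE hx
  rw [matchFun_closerAt hE]
  exact openerAt_lt_closerAt hE j

lemma lt_matchFun_iff (hE : E ⊆ Icc 1 n) {x : ℕ} :
    x < matchFun n E x ↔ x ∈ openers n E := by
  refine ⟨fun h => ?_, fun hA => ?_⟩
  · by_contra hA
    by_cases hB : x ∈ closers n E
    · exact lt_asymm h (matchFun_lt_of_mem_closers hE hB)
    · rw [matchFun_of_notMem hE hA hB] at h; exact lt_irrefl x h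
  · obtain ⟨j, rfl⟩ := exists_openerAt_eq hA
    rw [matchFun_openerAt]
    exact openerAt_lt_closerAt hE j

lemma strictMonoOn_matchFun_openers (hE : E ⊆ Icc 1 n) :
    StrictMonoOn (matchFun n E) (openers n E) := by
  intro x hx y hy hxy
  obtain ⟨i, rfl⟩ := exists_openerAt_eq hx
  obtain ⟨j, rfl⟩ := exists_openerAt_eq hy
  rw [matchFun_openerAt, matchFun_openerAt, closerAt_eq_orderEmbOfFin hE,
    closerAt_eq_orderEmbOfFin hE, OrderEmbedding.lt_iff_lt]
  exact (openerAt n E).lt_iff_lt.mp hxy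

lemma lt_openerAt_of_lt_closerAt (hE : E ⊆ Icc 1 n) {x : ℕ} (hx : x ∈ Icc 1 (2 * n))
    (hA : x ∉ openers n E) (hB : x ∉ closers n E) (j : Fin #(openers n E))
    (hxj : x < closerAt n E j) : x < openerAt n E j := by
  have hx := mem_Icc.mp hx
  have hcount := prefixCount_openers_eq_closers_of_notMem hE hx.1 hx.2 hA hB
  by_contra hle
  have hj := (orderEmbOfFin_le_iff _ _ j x).mp (not_lt.mp hle)
  rw [← prefixCount, hcount, prefixCount, ← orderEmbOfFin_le_iff _ (card_closers hE),
    ← closerAt_eq_orderEmbOfFin hE] at hj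
  exact not_le.mpr hxj hj

lemma strictMonoOn_matchFun_notMem_openers (hE : E ⊆ Icc 1 n) :
    StrictMonoOn (matchFun n E) (Icc 1 (2 * n) \ openers n E : Finset ℕ) := by
  intro x hx y hy hxy
  simp only [coe_sdiff, Set.mem_sdiff, mem_coe] at hx hy
  by_cases hxB : x ∈ closers n E
  · by_cases hyB : y ∈ closers n E
    · obtain ⟨i, rfl⟩ := exists_closerAt_eq hE hxB
      obtain ⟨j, rfl⟩ := exists_closerAt_eq hE hyB
      rw [matchFun_closerAt hE, matchFun_closerAt hE, OrderEmbedding.lt_iff_lt]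
      rwa [closerAt_eq_orderEmbOfFin hE, closerAt_eq_orderEmbOfFin hE,
        OrderEmbedding.lt_iff_lt] at hxy
    · rw [matchFun_of_notMem hE hy.2 hyB]
      exact (matchFun_lt_of_mem_closers hE hxB).trans hxy
  · rw [matchFun_of_notMem hE hx.2 hxB]
    by_cases hyB : y ∈ closers n E
    · obtain ⟨j, rfl⟩ := exists_closerAt_eq hE hyB
      rw [matchFun_closerAt hE]
      exact lt_openerAt_of_lt_closerAt hE hx.1 hx.2 hxB j hxy
    · rwa [matchFun_of_notMem hE hy.2 hyB]

end Matching

section MatchPerm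

variable {n : ℕ} {E : Finset ℕ} (hE : E ⊆ Icc 1 n)
include hE

lemma matchFun_succ_mem_Icc (x : Fin (2 * n)) : matchFun n E (x + 1) ∈ Icc 1 (2 * n) :=
  matchFun_mem_Icc hE (mem_Icc.mpr ⟨by omega, x.2⟩)

/-- `matchFun` read on `Fin (2 * n)`, i.e. with positions shifted to start at `0`. -/
noncomputable def matchFin (x : Fin (2 * n)) : Fin (2 * n) :=
  ⟨matchFun n E (x + 1) - 1, by have := mem_Icc.mp (matchFun_succ_mem_Icc hE x); omega⟩

lemma matchFin_val_add_one (x : Fin (2 * n)) :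
    (matchFin hE x : ℕ) + 1 = matchFun n E (x + 1) := by
  have := mem_Icc.mp (matchFun_succ_mem_Icc hE x)
  simp only [matchFin]; omega

lemma matchFin_involutive : Function.Involutive (matchFin hE) := fun x => by
  ext
  have h := matchFin_val_add_one hE (matchFin hE x)
  rw [matchFin_val_add_one hE x, matchFun_matchFun hE] at h
  omega

noncomputable def matchPerm : Equiv.Perm (Fin (2 * n)) := (matchFin_involutive hE).toPerm

lemma matchPerm_involutive : Function.Involutive (matchPerm hE) := matchFin_involutive hE

lemma matchPerm_val_add_one (x : Fin (2 * n)) :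
    (matchPerm hE x : ℕ) + 1 = matchFun n E (x + 1) :=
  matchFin_val_add_one hE x

lemma centro_matchPerm : Centro (matchPerm hE) := by
  rw [centro_iff]
  intro x
  have hrev : (x.rev : ℕ) + 1 = mirrorPos n (x + 1) := by
    simp only [Fin.val_rev, mirrorPos]; omega
  have h := matchPerm_val_add_one hE x.rev
  rw [hrev, matchFun_mirrorPos hE (mem_Icc.mpr ⟨by omega, x.2⟩),
    ← matchPerm_val_add_one hE x] at h
  ext
  simp only [Fin.val_rev, mirrorPos] at h ⊢
  omega

lemma lt_matchPerm_iff (x : Fin (2 * n)) :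
    x < matchPerm hE x ↔ (x : ℕ) + 1 ∈ openers n E := by
  rw [← lt_matchFun_iff hE, ← matchPerm_val_add_one hE, Fin.lt_def]
  omega

lemma matchPerm_lt_matchPerm_iff (x y : Fin (2 * n)) :
    matchPerm hE x < matchPerm hE y ↔ matchFun n E (x + 1) < matchFun n E (y + 1) := by
  rw [← matchPerm_val_add_one hE, ← matchPerm_val_add_one hE, Fin.lt_def]
  omega

lemma avoids321_matchPerm : Avoids321 (matchPerm hE) := by
  apply avoids321_of_strictMonoOn
  · intro x hx y hy hxy
    rw [matchPerm_lt_matchPerm_iff]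
    exact strictMonoOn_matchFun_openers hE ((lt_matchPerm_iff hE x).mp hx)
      ((lt_matchPerm_iff hE y).mp hy) (by omega)
  · have hmem : ∀ z : Fin (2 * n), matchPerm hE z ≤ z →
        (z : ℕ) + 1 ∈ (Icc 1 (2 * n) \ openers n E : Finset ℕ) := fun z hz => by
      rw [mem_sdiff, mem_Icc, ← lt_matchPerm_iff hE]
      exact ⟨⟨by omega, z.2⟩, not_lt.mpr hz⟩
    intro x hx y hy hxy
    rw [matchPerm_lt_matchPerm_iff]
    exact strictMonoOn_matchFun_notMem_openers hE (hmem x hx) (hmem y hy) (by omega)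

lemma pval_matchPerm {i : ℕ} (h1 : 1 ≤ i) (h2 : i ≤ 2 * n) :
    pval (matchPerm hE) i = matchFun n E i := by
  obtain ⟨x, rfl⟩ : ∃ x : Fin (2 * n), (x : ℕ) + 1 = i :=
    ⟨⟨i - 1, by omega⟩, by simp only; omega⟩
  rw [pval_succ, matchPerm_val_add_one]

lemma Epi_matchPerm : Epi (matchPerm hE) = E := by
  ext i
  simp only [Epi, mem_filter, mem_Icc]
  by_cases hi : 1 ≤ i ∧ i ≤ n
  · rw [pval_matchPerm hE hi.1 (by omega), lt_matchFun_iff hE, mem_openers_iff_of_le hi.2]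
    exact and_iff_right hi
  · exact iff_of_false (fun h => hi h.1) fun h => hi (mem_Icc.mp (hE h))

end MatchPerm

/-- The map `π ↦ E_π` is a bijection from `I^C_{2n}(321)` onto the power set of `[n]`. -/
theorem excedance_set_bijection (n : ℕ) :
    Set.BijOn (fun π => Epi π) ((ICset n : Finset (Equiv.Perm (Fin (2 * n)))) : Set (Equiv.Perm (Fin (2 * n)))) (((Finset.Icc 1 n).powerset : Finset (Finset ℕ)) : Set (Finset ℕ)) := by
  refine ⟨fun π _ => ?_, fun π hπ σ hσ h => eq_of_Epi_eq hπ hσ h, fun E hE => ?_⟩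
  · exact mem_powerset.mpr (Epi_subset π)
  · have hE : E ⊆ Icc 1 n := mem_powerset.mp hE
    refine ⟨matchPerm hE, ?_, Epi_matchPerm hE⟩
    rw [mem_coe, mem_ICset]
    exact ⟨matchPerm_involutive hE, centro_matchPerm hE, avoids321_matchPerm hE⟩
end

section
/- Let π be a 321-avoiding centrosymmetric involution of S_{2n} and let E_π = {i ∈ [n] : π(i) > i}. Then des(π) = 2·des^+(π) - 1 if n ∈ E_π, and des(π) = 2·des^+(π) otherwise. -/
open Finset Polynomial
open scoped Classical

/-!
Centrosymmetry `π(i) + π(2n+1-i) = 2n+1` makes `i ↦ 2n - i` an involution of the descent set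
exchanging the descents below `n` with those above `n`, so `des(π) = 2·#{descents < n} + [n is a
descent]`. At the middle position, `π(n+1) = 2n+1 - π(n)`, so `n` is a descent exactly when `n` is an
excedance.
-/

theorem Finset.card_filter_le_eq_card_filter_lt_add (s : Finset ℕ) (n : ℕ) :
    #(s.filter (· ≤ n)) = #(s.filter (· < n)) + if n ∈ s then 1 else 0 := by
  have hsplit : s.filter (· ≤ n) = s.filter (· < n) ∪ s.filter (· = n) := by
    ext j
    simp only [mem_filter, mem_union, ← and_or_left, le_iff_lt_or_eq]
  rw [hsplit, card_union_of_disjoint (disjoint_filter.mpr fun _ _ h => h.ne), filter_eq']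
  split_ifs <;> rfl

lemma mem_desSet_iff {m : ℕ} (π : Equiv.Perm (Fin m)) (i : ℕ) :
    i ∈ DesSet π ↔ 1 ≤ i ∧ i < m ∧ pval π (i + 1) < pval π i := by
  simp only [DesSet, mem_filter, mem_Ico, and_assoc]

namespace Centro

variable {m : ℕ} {π : Equiv.Perm (Fin m)}

theorem tsub_mem_desSet (hC : Centro π) {i : ℕ} (hi : i ∈ DesSet π) : m - i ∈ DesSet π := by
  obtain ⟨hi1, him, hdes⟩ := (mem_desSet_iff π i).mp hi
  have hleft := hC i (mem_Icc.mpr ⟨hi1, him.le⟩)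
  have hright := hC (i + 1) (mem_Icc.mpr ⟨by omega, him⟩)
  rw [show m + 1 - i = m - i + 1 by omega] at hleft
  rw [show m + 1 - (i + 1) = m - i by omega] at hright
  exact (mem_desSet_iff π _).mpr ⟨by omega, by omega, by omega⟩

theorem card_desSet_filter_gt_eq (hC : Centro π) :
    #((DesSet π).filter (m < 2 * ·)) = #((DesSet π).filter (2 * · < m)) := by
  have hlt : ∀ i ∈ DesSet π, i < m := fun i hi => ((mem_desSet_iff π i).mp hi).2.1
  refine card_nbij' (m - ·) (m - ·) ?_ ?_ ?_ ?_ <;> intro i hi <;>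
    simp only [coe_filter, Set.mem_ofPred_eq] at hi ⊢ <;> have := hlt i hi.1
  · exact ⟨hC.tsub_mem_desSet hi.1, by omega⟩
  · exact ⟨hC.tsub_mem_desSet hi.1, by omega⟩
  all_goals omega

end Centro

theorem Centro.mem_epi_iff_mem_desSet {n : ℕ} {π : Equiv.Perm (Fin (2 * n))} (hC : Centro π) :
    n ∈ Epi π ↔ n ∈ DesSet π := by
  rcases Nat.eq_zero_or_pos n with rfl | hn
  · simp [Epi, DesSet]
  have hmid := hC n (mem_Icc.mpr ⟨hn, by omega⟩)
  rw [show 2 * n + 1 - n = n + 1 by omega] at hmid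
  simp only [Epi, mem_filter, mem_Icc, mem_desSet_iff]
  omega

/-- For `π ∈ I^C_{2n}(321)`, `des(π) = 2·des^+(π) - 1` if `n ∈ E_π`, else `2·des^+(π)`. -/
theorem des_eq_two_desPlus (n : ℕ) (π : Equiv.Perm (Fin (2 * n))) (hπ : π ∈ ICset n) :
    desNum π =
      if n ∈ Epi π then 2 * ((DesSet π).filter (· ≤ n)).card - 1
      else 2 * ((DesSet π).filter (· ≤ n)).card := by
  have hC : Centro π := (mem_filter.mp hπ).2.2.1
  have hhalves : #((DesSet π).filter (n < ·)) = #((DesSet π).filter (· < n)) := by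
    simpa only [show ∀ j, 2 * n < 2 * j ↔ n < j by omega,
      show ∀ j, 2 * j < 2 * n ↔ j < n by omega] using hC.card_desSet_filter_gt_eq
  have htotal := card_filter_add_card_filter_not (s := DesSet π) (p := (· ≤ n))
  simp only [not_le] at htotal
  rw [card_filter_le_eq_card_filter_lt_add] at htotal ⊢
  simp only [hC.mem_epi_iff_mem_desSet, desNum]
  split_ifs at htotal ⊢ <;> omega
end
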